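/- Let A₁,…,Aₘ be real n×n matrices, let k ≥ 1, and let ρ̂ denote the ellipsoid approximation. Then (1/m^{1/(2k)})·ρ̂(A₁^{⊗k},…,Aₘ^{⊗k})^{1/k} ≤ ρ(A₁,…,Aₘ) ≤ ρ̂(A₁^{⊗k},…,Aₘ^{⊗k})^{1/k}, where A^{⊗k} denotes the k-th Kronecker power. -/

import Mathlib

open scoped Kronecker

/-- The ℓ₂ operator norm of a square real matrix. -/
noncomputable def l2OpNorm {ι : Type*} [Fintype ι] [DecidableEq ι]
    (A : Matrix ι ι ℝ) : ℝ :=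
  ‖Matrix.toEuclideanCLM (𝕜 := ℝ) A‖

/-- The product `A_{σ_k} ⋯ A_{σ_1}` associated to the word `σ`. -/
noncomputable def wordProd {ι : Type*} [Fintype ι] [DecidableEq ι] {m k : ℕ}
    (A : Fin m → Matrix ι ι ℝ) (σ : Fin k → Fin m) : Matrix ι ι ℝ :=
  (List.ofFn fun i => A (σ i)).reverse.prod

/-- The joint spectral radius of `A₁, …, Aₘ` (w.r.t. the ℓ₂ operator norm). -/
noncomputable def jsr {ι : Type*} [Fintype ι] [DecidableEq ι] {m : ℕ}
    (A : Fin m → Matrix ι ι ℝ) : ℝ :=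
  Filter.atTop.limsup fun k : ℕ =>
    ⨆ σ : Fin k → Fin m, l2OpNorm (wordProd A σ) ^ ((1 : ℝ) / (k : ℝ))

/-- The spectral radius of a single matrix, `ρ(A) = lim_k ‖A^k‖^{1/k}`. -/
noncomputable def specRad {ι : Type*} [Fintype ι] [DecidableEq ι]
    (A : Matrix ι ι ℝ) : ℝ :=
  Filter.atTop.limsup fun k : ℕ => l2OpNorm (A ^ k) ^ ((1 : ℝ) / (k : ℝ))

/-- The `k`-th Kronecker power of a square matrix. -/
noncomputable def kronPow {n : ℕ} (A : Matrix (Fin n) (Fin n) ℝ) :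
    (k : ℕ) → Matrix (Fin (n ^ k)) (Fin (n ^ k)) ℝ
  | 0 => 1
  | k + 1 =>
    Matrix.reindex (finProdFinEquiv.trans (finCongr (pow_succ n k).symm))
      (finProdFinEquiv.trans (finCongr (pow_succ n k).symm))
      ((kronPow A k) ⊗ₖ A)
open scoped Matrix

/-- The ellipsoid approximation of the joint spectral radius of
`A₁, …, Aₘ`. -/
noncomputable def ellips {N m : ℕ} (A : Fin m → Matrix (Fin N) (Fin N) ℝ) :
    ℝ :=
  Real.sqrt (sInf {τ : ℝ | ∃ X : Matrix (Fin N) (Fin N) ℝ, X.PosDef ∧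
    ∀ i, (τ • X - A i * X * (A i)ᵀ).PosSemidef})

/-! ### Auxiliary material -/

set_option linter.unusedSectionVars false
set_option maxHeartbeats 2000000

open scoped Matrix.Norms.L2Operator

namespace EllipsAux

variable {ι κ ι' κ' : Type*} [Fintype ι] [Fintype κ] [Fintype ι'] [Fintype κ']
  [DecidableEq ι] [DecidableEq κ] [DecidableEq ι'] [DecidableEq κ']

lemma l2OpNorm_eq_norm (A : Matrix ι ι ℝ) : l2OpNorm A = ‖A‖ := rfl

noncomputable def enorm {ι : Type*} [Fintype ι] (x : ι → ℝ) : ℝ := Real.sqrt (∑ i, x i ^ 2)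

lemma enorm_nonneg (x : ι → ℝ) : 0 ≤ enorm x := Real.sqrt_nonneg _

lemma sq_enorm (x : ι → ℝ) : enorm x ^ 2 = ∑ i, x i ^ 2 :=
  Real.sq_sqrt (by positivity)

lemma conjT_real (A : Matrix ι κ ℝ) : Aᴴ = Aᵀ := by
  ext i j; simp [Matrix.conjTranspose_apply]

lemma norm_transpose (A : Matrix ι κ ℝ) : ‖Aᵀ‖ = ‖A‖ := by
  rw [← conjT_real, Matrix.l2_opNorm_conjTranspose]

lemma mulVec_enorm_le (A : Matrix ι κ ℝ) (x : κ → ℝ) : enorm (A *ᵥ x) ≤ ‖A‖ * enorm x := by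
  have := Matrix.l2_opNorm_mulVec A ((WithLp.equiv 2 _).symm x)
  simpa [enorm, EuclideanSpace.norm_eq, Real.norm_eq_abs, sq_abs] using this

lemma sq_enorm_mulVec_le (A : Matrix ι κ ℝ) (x : κ → ℝ) :
    ∑ i, (A *ᵥ x) i ^ 2 ≤ ‖A‖ ^ 2 * ∑ j, x j ^ 2 := by
  have h := mulVec_enorm_le A x
  have := pow_le_pow_left₀ (enorm_nonneg _) h 2
  rw [mul_pow, sq_enorm, sq_enorm] at this
  exact this

lemma opNorm_le_of_enorm (A : Matrix ι κ ℝ) {c : ℝ} (hc : 0 ≤ c)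
    (h : ∀ x, enorm (A *ᵥ x) ≤ c * enorm x) : ‖A‖ ≤ c := by
  rw [Matrix.l2_opNorm_def]
  apply ContinuousLinearMap.opNorm_le_bound _ hc
  intro x
  have := h ((WithLp.equiv 2 _) x)
  simpa [enorm, EuclideanSpace.norm_eq, Real.norm_eq_abs, sq_abs, Matrix.toEuclideanLin] using this

lemma dot_le (x y : ι → ℝ) : x ⬝ᵥ y ≤ enorm x * enorm y := by
  have h := Finset.sum_mul_sq_le_sq_mul_sq Finset.univ x y
  calc x ⬝ᵥ y ≤ |∑ i, x i * y i| := le_abs_self _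
    _ = Real.sqrt ((∑ i, x i * y i) ^ 2) := (Real.sqrt_sq_eq_abs _).symm
    _ ≤ Real.sqrt ((∑ i, x i ^ 2) * ∑ i, y i ^ 2) := Real.sqrt_le_sqrt h
    _ = enorm x * enorm y := by
        rw [enorm, enorm, Real.sqrt_mul (by positivity)]

lemma dot_self (x : ι → ℝ) : x ⬝ᵥ x = enorm x ^ 2 := by
  rw [sq_enorm]; simp [dotProduct, sq]

lemma isHermitian_of_transpose {M : Matrix ι ι ℝ} (h : Mᵀ = M) : M.IsHermitian := by
  rw [Matrix.IsHermitian, conjT_real, h]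

lemma psd_smul {M : Matrix ι ι ℝ} (h : M.PosSemidef) {c : ℝ} (hc : 0 ≤ c) :
    (c • M).PosSemidef := by
  refine Matrix.PosSemidef.of_dotProduct_mulVec_nonneg ?_ fun x => ?_
  · rw [Matrix.IsHermitian, Matrix.conjTranspose_smul, h.1.eq]; simp
  · rw [Matrix.smul_mulVec, dotProduct_smul]
    exact mul_nonneg hc (h.dotProduct_mulVec_nonneg x)

lemma psd_of_norm_le {M : Matrix ι ι ℝ} (hsym : Mᵀ = M) {t : ℝ} (h : ‖M‖ ≤ t) :
    (t • (1 : Matrix ι ι ℝ) - M).PosSemidef := by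
  refine Matrix.PosSemidef.of_dotProduct_mulVec_nonneg ?_ fun x => ?_
  · apply isHermitian_of_transpose
    rw [Matrix.transpose_sub, Matrix.transpose_smul, Matrix.transpose_one, hsym]
  · have hx : star x = x := by funext i; simp
    rw [hx, Matrix.sub_mulVec, dotProduct_sub, Matrix.smul_mulVec,
      Matrix.one_mulVec, dotProduct_smul]
    have h1 : x ⬝ᵥ M *ᵥ x ≤ ‖M‖ * enorm x ^ 2 := by
      calc x ⬝ᵥ M *ᵥ x ≤ enorm x * enorm (M *ᵥ x) := dot_le _ _
        _ ≤ enorm x * (‖M‖ * enorm x) := by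
            apply mul_le_mul_of_nonneg_left (mulVec_enorm_le M x) (enorm_nonneg x)
        _ = ‖M‖ * enorm x ^ 2 := by ring
    have h2 : ‖M‖ * enorm x ^ 2 ≤ t * enorm x ^ 2 :=
      mul_le_mul_of_nonneg_right h (by positivity)
    rw [dot_self, smul_eq_mul]
    linarith

lemma norm_le_sqrt_of_psd {M : Matrix ι ι ℝ} {t : ℝ} (ht : 0 ≤ t)
    (h : (t • (1 : Matrix ι ι ℝ) - M * Mᵀ).PosSemidef) : ‖M‖ ≤ Real.sqrt t := by
  rw [← norm_transpose]
  apply opNorm_le_of_enorm _ (by positivity)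
  intro x
  have h2 := h.dotProduct_mulVec_nonneg x
  have hx : star x = x := by funext i; simp
  rw [hx, Matrix.sub_mulVec, dotProduct_sub, Matrix.smul_mulVec,
    Matrix.one_mulVec, dotProduct_smul, ← Matrix.mulVec_mulVec,
    Matrix.dotProduct_mulVec, ← Matrix.mulVec_transpose, dot_self, dot_self,
    smul_eq_mul, sub_nonneg] at h2
  have hsq : enorm (Mᵀ *ᵥ x) ^ 2 ≤ (Real.sqrt t * enorm x) ^ 2 := by
    rw [mul_pow, Real.sq_sqrt ht]; exact h2
  exact (pow_le_pow_iff_left₀ (enorm_nonneg _)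
    (mul_nonneg (Real.sqrt_nonneg _) (enorm_nonneg _)) (by norm_num)).mp hsq

lemma kron_mulVec (M : Matrix ι ι' ℝ) (N : Matrix κ κ' ℝ) (w : ι' × κ' → ℝ) (p : ι × κ) :
    ((M ⊗ₖ N) *ᵥ w) p = ∑ q : ι' × κ', M p.1 q.1 * N p.2 q.2 * w q := by
  simp [Matrix.mulVec, dotProduct, Matrix.kroneckerMap_apply]

lemma kron_norm_le (M : Matrix ι ι' ℝ) (N : Matrix κ κ' ℝ) : ‖M ⊗ₖ N‖ ≤ ‖M‖ * ‖N‖ := by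
  apply opNorm_le_of_enorm _ (mul_nonneg (norm_nonneg M) (norm_nonneg N))
  intro w
  have key : ∑ p : ι × κ, ((M ⊗ₖ N) *ᵥ w) p ^ 2 ≤
      (‖M‖ * ‖N‖) ^ 2 * ∑ q : ι' × κ', w q ^ 2 := by
    set u : ι → κ' → ℝ := fun i q2 => (M *ᵥ fun q1 => w (q1, q2)) i with hu
    have hy : ∀ p : ι × κ, ((M ⊗ₖ N) *ᵥ w) p = (N *ᵥ u p.1) p.2 := by
      intro p
      rw [kron_mulVec]
      simp only [hu, Matrix.mulVec, dotProduct, Fintype.sum_prod_type]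
      rw [Finset.sum_comm]
      congr 1; ext q1
      rw [Finset.mul_sum]
      congr 1; ext q2
      ring
    calc ∑ p : ι × κ, ((M ⊗ₖ N) *ᵥ w) p ^ 2
        = ∑ i : ι, ∑ j : κ, (N *ᵥ u i) j ^ 2 := by
          rw [Fintype.sum_prod_type]
          exact Finset.sum_congr rfl fun i _ => Finset.sum_congr rfl fun j _ => by rw [hy (i, j)]
      _ ≤ ∑ i : ι, ‖N‖ ^ 2 * ∑ q2, u i q2 ^ 2 :=
          Finset.sum_le_sum fun i _ => sq_enorm_mulVec_le N (u i)
      _ = ‖N‖ ^ 2 * ∑ q2 : κ', ∑ i : ι, u i q2 ^ 2 := by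
          rw [← Finset.mul_sum, Finset.sum_comm]
      _ ≤ ‖N‖ ^ 2 * ∑ q2 : κ', ‖M‖ ^ 2 * ∑ q1 : ι', w (q1, q2) ^ 2 := by
          apply mul_le_mul_of_nonneg_left _ (by positivity)
          exact Finset.sum_le_sum fun q2 _ => sq_enorm_mulVec_le M _
      _ = (‖M‖ * ‖N‖) ^ 2 * ∑ q : ι' × κ', w q ^ 2 := by
          rw [← Finset.mul_sum, Fintype.sum_prod_type_right]
          ring
  have h1 : enorm ((M ⊗ₖ N) *ᵥ w) ^ 2 ≤ ((‖M‖ * ‖N‖) * enorm w) ^ 2 := by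
    rw [sq_enorm, mul_pow, sq_enorm]
    exact key
  exact (pow_le_pow_iff_left₀ (enorm_nonneg _)
    (mul_nonneg (mul_nonneg (norm_nonneg M) (norm_nonneg N)) (enorm_nonneg _)) (by norm_num)).mp h1

lemma kron_mulVec_pure (M : Matrix ι ι' ℝ) (N : Matrix κ κ' ℝ) (u : ι' → ℝ) (v : κ' → ℝ) :
    (M ⊗ₖ N) *ᵥ (fun q => u q.1 * v q.2) = fun p => (M *ᵥ u) p.1 * (N *ᵥ v) p.2 := by
  funext p
  rw [kron_mulVec]
  have : (M *ᵥ u) p.1 * (N *ᵥ v) p.2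
      = ∑ q1, ∑ q2, M p.1 q1 * u q1 * (N p.2 q2 * v q2) := by
    rw [← Finset.sum_mul_sum]; rfl
  rw [this, Fintype.sum_prod_type]
  exact Finset.sum_congr rfl fun q1 _ => Finset.sum_congr rfl fun q2 _ => by ring

lemma enorm_pure (u : ι → ℝ) (v : κ → ℝ) :
    enorm (fun q : ι × κ => u q.1 * v q.2) = enorm u * enorm v := by
  have hs : ∑ q : ι × κ, (u q.1 * v q.2) ^ 2 = (∑ i, u i ^ 2) * ∑ j, v j ^ 2 := by
    rw [Fintype.sum_prod_type, Finset.sum_mul]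
    congr 1; ext i; rw [Finset.mul_sum]; congr 1; ext j; ring
  have h1 : enorm (fun q : ι × κ => u q.1 * v q.2) ^ 2 = (enorm u * enorm v) ^ 2 := by
    rw [sq_enorm, mul_pow, sq_enorm, sq_enorm, hs]
  have := congrArg Real.sqrt h1
  rwa [Real.sqrt_sq (enorm_nonneg _),
    Real.sqrt_sq (mul_nonneg (enorm_nonneg _) (enorm_nonneg _))] at this

lemma reindex_mulVec (e : ι ≃ ι') (f : κ ≃ κ') (M : Matrix ι κ ℝ) (x : κ' → ℝ) :
    (Matrix.reindex e f M) *ᵥ x = fun i => (M *ᵥ (x ∘ f)) (e.symm i) := by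
  funext i
  simp only [Matrix.reindex_apply, Matrix.mulVec, dotProduct, Matrix.submatrix_apply]
  exact (Fintype.sum_equiv f (fun j => M (e.symm i) j * (x ∘ f) j)
    (fun j => M (e.symm i) (f.symm j) * x j) (by intro j; simp)).symm ▸ rfl

lemma enorm_comp_equiv (e : ι ≃ κ) (x : κ → ℝ) : enorm (x ∘ e) = enorm x := by
  have hs : ∑ i, (x ∘ e) i ^ 2 = ∑ j, x j ^ 2 := Fintype.sum_equiv e _ _ fun i => rfl
  have h1 : enorm (x ∘ e) ^ 2 = enorm x ^ 2 := by rw [sq_enorm, sq_enorm, hs]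
  have := congrArg Real.sqrt h1
  rwa [Real.sqrt_sq (enorm_nonneg _), Real.sqrt_sq (enorm_nonneg _)] at this

lemma norm_reindex_le (e : ι ≃ κ) (M : Matrix ι ι ℝ) : ‖Matrix.reindex e e M‖ ≤ ‖M‖ := by
  apply opNorm_le_of_enorm _ (norm_nonneg M)
  intro x
  rw [reindex_mulVec]
  have hfn : (fun i => (M *ᵥ (x ∘ e)) (e.symm i)) = (M *ᵥ (x ∘ e)) ∘ e.symm := rfl
  rw [hfn, enorm_comp_equiv e.symm]
  calc enorm (M *ᵥ (x ∘ e)) ≤ ‖M‖ * enorm (x ∘ e) := mulVec_enorm_le M _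
    _ = ‖M‖ * enorm x := by rw [enorm_comp_equiv]

lemma norm_reindex (e : ι ≃ κ) (M : Matrix ι ι ℝ) : ‖Matrix.reindex e e M‖ = ‖M‖ := by
  refine le_antisymm (norm_reindex_le e M) ?_
  have := norm_reindex_le e.symm (Matrix.reindex e e M)
  rwa [← Matrix.reindex_symm, Equiv.symm_apply_apply] at this

lemma reindex_mul (e : ι ≃ κ) (M N : Matrix ι ι ℝ) :
    Matrix.reindex e e (M * N) = Matrix.reindex e e M * Matrix.reindex e e N := by
  simp only [Matrix.reindex_apply]
  rw [Matrix.submatrix_mul_equiv]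

lemma reindex_one (e : ι ≃ κ) : Matrix.reindex e e (1 : Matrix ι ι ℝ) = 1 := by
  simp only [Matrix.reindex_apply]
  rw [Matrix.submatrix_one_equiv]

lemma norm_one_matrix [Nonempty ι] : ‖(1 : Matrix ι ι ℝ)‖ = 1 := by
  rw [Matrix.cstar_norm_def, map_one]
  exact ContinuousLinearMap.norm_id

section KronPow

variable {n : ℕ}

def kpe (n k : ℕ) : (Fin (n ^ k) × Fin n) ≃ Fin (n ^ (k + 1)) :=
  finProdFinEquiv.trans (finCongr (pow_succ n k).symm)

instance instNe (n : ℕ) : Nonempty (Fin (n ^ 0)) := ⟨⟨0, by simp⟩⟩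

lemma kronPow_succ (A : Matrix (Fin n) (Fin n) ℝ) (k : ℕ) :
    kronPow A (k + 1) = Matrix.reindex (kpe n k) (kpe n k) ((kronPow A k) ⊗ₖ A) := rfl

noncomputable def vecKronPow {n : ℕ} (u : Fin n → ℝ) : (k : ℕ) → Fin (n ^ k) → ℝ
  | 0 => fun _ => 1
  | k + 1 => (fun q : Fin (n ^ k) × Fin n => vecKronPow u k q.1 * u q.2) ∘ (kpe n k).symm

lemma kronPow_mulVec (M : Matrix (Fin n) (Fin n) ℝ) (u : Fin n → ℝ) (k : ℕ) :
    (kronPow M k) *ᵥ (vecKronPow u k) = vecKronPow (M *ᵥ u) k := by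
  induction k with
  | zero =>
    show (1 : Matrix (Fin (n ^ 0)) (Fin (n ^ 0)) ℝ) *ᵥ _ = _
    rw [Matrix.one_mulVec]; rfl
  | succ k ih =>
    rw [kronPow_succ, reindex_mulVec]
    have hcomp : (vecKronPow u (k + 1)) ∘ (kpe n k) =
        fun q : Fin (n ^ k) × Fin n => vecKronPow u k q.1 * u q.2 := by
      funext q; simp [vecKronPow, Function.comp]
    rw [hcomp, kron_mulVec_pure, ih]
    rfl

lemma enorm_vecKronPow (u : Fin n → ℝ) (k : ℕ) :
    enorm (vecKronPow u k) = enorm u ^ k := by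
  induction k with
  | zero =>
    show enorm (fun _ : Fin (n ^ 0) => (1 : ℝ)) = 1
    have hs : ∑ _i : Fin (n ^ 0), ((1 : ℝ)) ^ 2 = 1 := by
      rw [Finset.sum_const, Finset.card_univ, Fintype.card_eq_nat_card, Nat.card_eq_fintype_card,
        Fintype.card_fin]; simp
    rw [enorm, hs, Real.sqrt_one]
  | succ k ih =>
    show enorm ((fun q : Fin (n ^ k) × Fin n => vecKronPow u k q.1 * u q.2) ∘ (kpe n k).symm)
      = enorm u ^ (k + 1)
    rw [enorm_comp_equiv, enorm_pure, ih, pow_succ]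

lemma norm_kronPow_le (M : Matrix (Fin n) (Fin n) ℝ) (k : ℕ) : ‖kronPow M k‖ ≤ ‖M‖ ^ k := by
  induction k with
  | zero =>
    have h0 : ‖M‖ ^ 0 = 1 := pow_zero _
    rw [h0]; exact le_of_eq norm_one_matrix
  | succ k ih =>
    rw [kronPow_succ, norm_reindex, pow_succ]
    exact le_trans (kron_norm_le _ _) (mul_le_mul_of_nonneg_right ih (norm_nonneg M))

lemma norm_kronPow (M : Matrix (Fin n) (Fin n) ℝ) (k : ℕ) : ‖kronPow M k‖ = ‖M‖ ^ k := by
  rcases Nat.eq_zero_or_pos k with hk | hk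
  · subst hk
    have h0 : ‖M‖ ^ 0 = 1 := pow_zero _
    rw [h0]; exact norm_one_matrix
  refine le_antisymm (norm_kronPow_le M k) ?_
  set K := ‖kronPow M k‖ with hKdef
  have hK : 0 ≤ K := norm_nonneg _
  have hKk : (K ^ ((1 : ℝ) / k)) ^ k = K := by
    rw [← Real.rpow_natCast (K ^ ((1 : ℝ) / k)) k, ← Real.rpow_mul hK]
    rw [one_div, inv_mul_cancel₀ (by exact_mod_cast hk.ne')]
    exact Real.rpow_one K
  have hb : ∀ u, enorm (M *ᵥ u) ≤ K ^ ((1 : ℝ) / k) * enorm u := by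
    intro u
    have h1 : enorm (M *ᵥ u) ^ k ≤ K * enorm u ^ k := by
      rw [← enorm_vecKronPow (M *ᵥ u) k, ← kronPow_mulVec, ← enorm_vecKronPow u k]
      exact mulVec_enorm_le _ _
    have h2 : enorm (M *ᵥ u) ^ k ≤ (K ^ ((1 : ℝ) / k) * enorm u) ^ k := by
      rw [mul_pow, hKk]; exact h1
    exact (pow_le_pow_iff_left₀ (enorm_nonneg _)
      (mul_nonneg (Real.rpow_nonneg hK _) (enorm_nonneg _)) hk.ne').mp h2
  have hMle := opNorm_le_of_enorm M (Real.rpow_nonneg hK _) hb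
  calc ‖M‖ ^ k ≤ (K ^ ((1 : ℝ) / k)) ^ k := pow_le_pow_left₀ (norm_nonneg M) hMle k
    _ = K := hKk

lemma kronPow_mul (M N : Matrix (Fin n) (Fin n) ℝ) (k : ℕ) :
    kronPow (M * N) k = kronPow M k * kronPow N k := by
  induction k with
  | zero => show (1 : Matrix (Fin (n^0)) (Fin (n^0)) ℝ) = 1 * 1; rw [one_mul]
  | succ k ih =>
    rw [kronPow_succ, kronPow_succ, kronPow_succ, ih, ← reindex_mul, ← Matrix.mul_kronecker_mul]

lemma kronPow_one_mat (k : ℕ) : kronPow (1 : Matrix (Fin n) (Fin n) ℝ) k = 1 := by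
  induction k with
  | zero => rfl
  | succ k ih => rw [kronPow_succ, ih, Matrix.one_kronecker_one, reindex_one]

noncomputable def kronPowHom (n k : ℕ) :
    Matrix (Fin n) (Fin n) ℝ →* Matrix (Fin (n ^ k)) (Fin (n ^ k)) ℝ where
  toFun M := kronPow M k
  map_one' := kronPow_one_mat k
  map_mul' M N := kronPow_mul M N k

lemma wordProd_kronPow {m k j : ℕ} (A : Fin m → Matrix (Fin n) (Fin n) ℝ)
    (σ : Fin j → Fin m) :
    wordProd (fun i => kronPow (A i) k) σ = kronPow (wordProd A σ) k := by
  unfold wordProd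
  have h1 : (List.ofFn fun i => kronPow (A (σ i)) k)
      = (List.ofFn fun i => A (σ i)).map (kronPowHom n k) := by
    rw [List.map_ofFn]; rfl
  rw [h1, ← List.map_reverse, List.prod_hom]
  rfl

end KronPow

section Word

lemma wordProd_zero {m : ℕ} (A : Fin m → Matrix ι ι ℝ) (σ : Fin 0 → Fin m) :
    wordProd A σ = 1 := by simp [wordProd]

lemma wordProd_snoc {m j : ℕ} (A : Fin m → Matrix ι ι ℝ) (σ : Fin j → Fin m) (i : Fin m) :
    wordProd A (Fin.snoc σ i) = A i * wordProd A σ := by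
  unfold wordProd
  rw [List.ofFn_succ']
  simp only [Fin.snoc_castSucc, Fin.snoc_last]
  rw [List.concat_eq_append, List.reverse_append, List.reverse_singleton]
  simp

lemma norm_wordProd_le [Nonempty ι] {m j : ℕ} (A : Fin m → Matrix ι ι ℝ)
    {a : ℝ} (ha0 : 0 ≤ a) (ha : ∀ i, ‖A i‖ ≤ a) (σ : Fin j → Fin m) :
    ‖wordProd A σ‖ ≤ a ^ j := by
  induction j with
  | zero => rw [wordProd_zero, pow_zero]; exact le_of_eq norm_one_matrix
  | succ j ih =>
    rw [← Fin.snoc_init_self σ, wordProd_snoc, pow_succ, mul_comm (a ^ j) a]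
    calc ‖A (σ (Fin.last j)) * wordProd A (Fin.init σ)‖
        ≤ ‖A (σ (Fin.last j))‖ * ‖wordProd A (Fin.init σ)‖ := norm_mul_le _ _
      _ ≤ a * a ^ j := mul_le_mul (ha _) (ih _) (norm_nonneg _) ha0

lemma wordProd_conj {m j : ℕ} (A : Fin m → Matrix ι ι ℝ) (L L' : Matrix ι ι ℝ)
    (hLL' : L * L' = 1) (hL'L : L' * L = 1) (σ : Fin j → Fin m) :
    wordProd (fun i => L' * A i * L) σ = L' * wordProd A σ * L := by
  induction j with
  | zero => rw [wordProd_zero, wordProd_zero, mul_one, hL'L]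
  | succ j ih =>
    rw [← Fin.snoc_init_self σ, wordProd_snoc, wordProd_snoc, ih]
    have : L' * A (σ (Fin.last j)) * L * (L' * wordProd A (Fin.init σ) * L)
        = L' * A (σ (Fin.last j)) * (L * L') * wordProd A (Fin.init σ) * L := by
      noncomm_ring
    rw [this, hLL', mul_one]
    noncomm_ring

lemma sum_word_succ {m j : ℕ} {α : Type*} [AddCommMonoid α]
    (f : (Fin (j + 1) → Fin m) → α) :
    ∑ σ : Fin (j + 1) → Fin m, f σ
      = ∑ i : Fin m, ∑ σ : Fin j → Fin m, f (Fin.snoc σ i) := by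
  rw [← Equiv.sum_comp (⟨fun p => Fin.snoc p.2 p.1, fun σ => (σ (Fin.last j), Fin.init σ),
    fun p => by simp, fun σ => by simp⟩ :
      (Fin m × (Fin j → Fin m)) ≃ (Fin (j + 1) → Fin m)) f, Fintype.sum_prod_type]
  rfl

end Word

section More

lemma psd_sum {α : Type*} (s : Finset α) (g : α → Matrix ι ι ℝ)
    (h : ∀ x ∈ s, (g x).PosSemidef) : (∑ x ∈ s, g x).PosSemidef := by
  classical
  induction s using Finset.induction with
  | empty => simpa using Matrix.PosSemidef.zero
  | @insert a s' hx ih =>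
    rw [Finset.sum_insert hx]
    exact (h a (Finset.mem_insert_self a s')).add
      (ih fun x hx' => h x (Finset.mem_insert_of_mem hx'))

end More

section JsrBasic

open Filter

variable {m : ℕ}

noncomputable def fseq (A : Fin m → Matrix ι ι ℝ) : ℕ → ℝ :=
  fun j => ⨆ σ : Fin j → Fin m, l2OpNorm (wordProd A σ) ^ ((1 : ℝ) / (j : ℝ))

lemma jsr_eq (A : Fin m → Matrix ι ι ℝ) : jsr A = Filter.atTop.limsup (fseq A) := rfl

lemma fseq_nonneg (A : Fin m → Matrix ι ι ℝ) (j : ℕ) : 0 ≤ fseq A j :=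
  Real.iSup_nonneg fun σ => Real.rpow_nonneg
    (by rw [l2OpNorm_eq_norm]; exact norm_nonneg _) _

noncomputable def abnd (A : Fin m → Matrix ι ι ℝ) : ℝ := 1 + ∑ i, ‖A i‖

lemma abnd_one_le (A : Fin m → Matrix ι ι ℝ) : 1 ≤ abnd A := by
  have h : 0 ≤ ∑ i, ‖A i‖ := Finset.sum_nonneg fun i _ => norm_nonneg _
  unfold abnd; linarith

lemma abnd_nonneg (A : Fin m → Matrix ι ι ℝ) : 0 ≤ abnd A :=
  le_trans zero_le_one (abnd_one_le A)

lemma norm_le_abnd (A : Fin m → Matrix ι ι ℝ) (i : Fin m) : ‖A i‖ ≤ abnd A := by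
  have h : ‖A i‖ ≤ ∑ i', ‖A i'‖ :=
    Finset.single_le_sum (fun i' _ => norm_nonneg (A i')) (Finset.mem_univ i)
  unfold abnd; linarith

lemma term_le_fseq (A : Fin m → Matrix ι ι ℝ) {j : ℕ} (σ : Fin j → Fin m) :
    l2OpNorm (wordProd A σ) ^ ((1 : ℝ) / (j : ℝ)) ≤ fseq A j := by
  exact le_ciSup (Set.Finite.bddAbove (Set.finite_range
    (fun σ : Fin j → Fin m => l2OpNorm (wordProd A σ) ^ ((1 : ℝ) / (j : ℝ))))) σ

lemma fseq_le [Nonempty ι] (hm : 0 < m) (A : Fin m → Matrix ι ι ℝ) (j : ℕ) :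
    fseq A j ≤ abnd A := by
  haveI : Nonempty (Fin m) := ⟨⟨0, hm⟩⟩
  apply ciSup_le
  intro σ
  rw [l2OpNorm_eq_norm]
  rcases Nat.eq_zero_or_pos j with hj | hj
  · subst hj
    rw [Nat.cast_zero, div_zero, Real.rpow_zero]
    exact abnd_one_le A
  · have hjR : (0 : ℝ) < j := by exact_mod_cast hj
    have h1 : ‖wordProd A σ‖ ≤ abnd A ^ j :=
      norm_wordProd_le A (abnd_nonneg A) (norm_le_abnd A) σ
    calc ‖wordProd A σ‖ ^ ((1 : ℝ) / (j : ℝ))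
        ≤ (abnd A ^ j) ^ ((1 : ℝ) / (j : ℝ)) :=
          Real.rpow_le_rpow (norm_nonneg _) h1 (by positivity)
      _ = abnd A := by
          rw [← Real.rpow_natCast (abnd A) j, ← Real.rpow_mul (abnd_nonneg A)]
          rw [mul_one_div, div_self (ne_of_gt hjR), Real.rpow_one]

lemma fseq_bdd [Nonempty ι] (hm : 0 < m) (A : Fin m → Matrix ι ι ℝ) :
    IsBoundedUnder (· ≤ ·) atTop (fseq A) :=
  Filter.isBoundedUnder_of ⟨abnd A, fseq_le hm A⟩

lemma fseq_cobdd (A : Fin m → Matrix ι ι ℝ) :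
    IsCoboundedUnder (· ≤ ·) atTop (fseq A) :=
  Filter.isCoboundedUnder_le_of_le atTop (fseq_nonneg A)

lemma jsr_nonneg [Nonempty ι] (hm : 0 < m) (A : Fin m → Matrix ι ι ℝ) : 0 ≤ jsr A := by
  rw [jsr_eq]
  exact le_limsup_of_frequently_le (Frequently.of_forall (fseq_nonneg A)) (fseq_bdd hm A)

lemma rpow_inv_le_pow {x b : ℝ} {j : ℕ} (hj : 1 ≤ j) (hx : 0 ≤ x) (hb : 0 ≤ b)
    (h : x ^ ((1 : ℝ) / (j : ℝ)) ≤ b) : x ≤ b ^ j := by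
  have hjR : (0 : ℝ) < j := by exact_mod_cast hj
  have h1 : (x ^ ((1 : ℝ) / (j : ℝ))) ^ j ≤ b ^ j :=
    pow_le_pow_left₀ (Real.rpow_nonneg hx _) h j
  rwa [← Real.rpow_natCast (x ^ ((1 : ℝ) / (j : ℝ))) j, ← Real.rpow_mul hx,
    one_div, inv_mul_cancel₀ (ne_of_gt hjR), Real.rpow_one] at h1

end JsrBasic

section Upper

open Filter

lemma jsr_le_tau {n m k : ℕ} (hm : 0 < m) (hn : 0 < n) (hk : 1 ≤ k)
    (A : Fin m → Matrix (Fin n) (Fin n) ℝ)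
    {τ : ℝ} (hτ0 : 0 ≤ τ)
    (X : Matrix (Fin (n ^ k)) (Fin (n ^ k)) ℝ) (hX : X.PosDef)
    (hPSD : ∀ i, (τ • X - kronPow (A i) k * X * (kronPow (A i) k)ᵀ).PosSemidef) :
    jsr A ≤ τ ^ ((1 : ℝ) / (2 * (k : ℝ))) := by
  haveI hNI : Nonempty (Fin n) := ⟨⟨0, hn⟩⟩
  haveI hNN : Nonempty (Fin (n ^ k)) := ⟨⟨0, pow_pos hn k⟩⟩
  haveI : Nonempty (Fin m) := ⟨⟨0, hm⟩⟩
  set B : Fin m → Matrix (Fin (n ^ k)) (Fin (n ^ k)) ℝ := fun i => kronPow (A i) k with hB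
  have hkR : (0 : ℝ) < k := by exact_mod_cast hk
  obtain ⟨L, hLh, hLL, hLdet⟩ : ∃ L : Matrix (Fin (n ^ k)) (Fin (n ^ k)) ℝ,
      L.IsHermitian ∧ L * L = X ∧ IsUnit L.det := by
    open scoped MatrixOrder in
    refine ⟨CFC.sqrt X, (Matrix.nonneg_iff_posSemidef.mp (CFC.sqrt_nonneg X)).1,
      CFC.sqrt_mul_sqrt_self X hX.posSemidef.nonneg, ?_⟩
    have hd : X.det ≠ 0 := ne_of_gt hX.det_pos
    open scoped MatrixOrder in
    have hdd : (CFC.sqrt X).det * (CFC.sqrt X).det = X.det := by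
      rw [← Matrix.det_mul, CFC.sqrt_mul_sqrt_self X hX.posSemidef.nonneg]
    exact isUnit_iff_ne_zero.mpr fun h0 => hd (by rw [← hdd, h0, mul_zero])
  have hLi := Matrix.mul_nonsing_inv L hLdet
  have hiL := Matrix.nonsing_inv_mul L hLdet
  have hLt : Lᵀ = L := by rw [← conjT_real]; exact hLh
  have hLit : (L⁻¹)ᵀ = L⁻¹ := by rw [Matrix.transpose_nonsing_inv, hLt]
  have hCnorm : ∀ i, ‖L⁻¹ * B i * L‖ ≤ Real.sqrt τ := by
    intro i
    apply norm_le_sqrt_of_psd hτ0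
    have h1 := (hPSD i).mul_mul_conjTranspose_same (L⁻¹)
    have hCt : (L⁻¹ * B i * L)ᵀ = L * ((B i)ᵀ * L⁻¹) := by
      rw [Matrix.transpose_mul, Matrix.transpose_mul, hLt, hLit]
    have h2 : L⁻¹ * (τ • X - B i * X * (B i)ᵀ) * (L⁻¹)ᴴ
        = τ • (1 : Matrix (Fin (n ^ k)) (Fin (n ^ k)) ℝ)
          - (L⁻¹ * B i * L) * (L⁻¹ * B i * L)ᵀ := by
      rw [conjT_real, hLit, Matrix.mul_sub, Matrix.sub_mul]
      congr 1
      · rw [mul_smul_comm, smul_mul_assoc]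
        congr 1
        rw [← hLL, ← Matrix.mul_assoc, hiL, Matrix.one_mul, hLi]
      · rw [hCt, ← hLL]
        simp only [Matrix.mul_assoc]
    rwa [h2] at h1
  have hwordB : ∀ (j : ℕ) (σ : Fin j → Fin m),
      ‖wordProd A σ‖ ^ k ≤ (‖L‖ * ‖L⁻¹‖) * Real.sqrt τ ^ j := by
    intro j σ
    have h3 := wordProd_conj B L L⁻¹ hLi hiL σ
    have h4 : ‖wordProd (fun i => L⁻¹ * B i * L) σ‖ ≤ Real.sqrt τ ^ j :=
      norm_wordProd_le _ (Real.sqrt_nonneg τ) hCnorm σ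
    have h5 : wordProd B σ = L * wordProd (fun i => L⁻¹ * B i * L) σ * L⁻¹ := by
      rw [h3]
      simp only [← Matrix.mul_assoc]
      rw [hLi, Matrix.one_mul, Matrix.mul_assoc, hLi, Matrix.mul_one]
    have h6 : ‖wordProd B σ‖ ≤ (‖L‖ * ‖L⁻¹‖) * Real.sqrt τ ^ j := by
      rw [h5]
      calc ‖L * wordProd (fun i => L⁻¹ * B i * L) σ * L⁻¹‖
          ≤ ‖L * wordProd (fun i => L⁻¹ * B i * L) σ‖ * ‖L⁻¹‖ := norm_mul_le _ _
        _ ≤ (‖L‖ * ‖wordProd (fun i => L⁻¹ * B i * L) σ‖) * ‖L⁻¹‖ :=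
            mul_le_mul_of_nonneg_right (norm_mul_le _ _) (norm_nonneg _)
        _ ≤ (‖L‖ * Real.sqrt τ ^ j) * ‖L⁻¹‖ := by
            apply mul_le_mul_of_nonneg_right _ (norm_nonneg _)
            exact mul_le_mul_of_nonneg_left h4 (norm_nonneg _)
        _ = (‖L‖ * ‖L⁻¹‖) * Real.sqrt τ ^ j := by ring
    rw [← norm_kronPow, ← wordProd_kronPow]
    exact h6
  set CL := ‖L‖ * ‖L⁻¹‖ with hCL
  have hCL0 : 0 < CL := by
    have h8 := norm_mul_le L L⁻¹
    rw [hLi] at h8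
    rw [norm_one_matrix] at h8
    linarith
  have hu : ∀ j : ℕ, 1 ≤ j →
      fseq A j ≤ CL ^ ((1 : ℝ) / ((j : ℝ) * (k : ℝ))) * τ ^ ((1 : ℝ) / (2 * (k : ℝ))) := by
    intro j hj
    apply ciSup_le
    intro σ
    rw [l2OpNorm_eq_norm]
    have hjR : (0 : ℝ) < j := by exact_mod_cast hj
    have hP0 : (0:ℝ) ≤ ‖wordProd A σ‖ := norm_nonneg _
    have h6 := hwordB j σ
    have e1 : ‖wordProd A σ‖ ^ ((1 : ℝ) / (j : ℝ))
        = (‖wordProd A σ‖ ^ k) ^ ((1 : ℝ) / ((j : ℝ) * (k : ℝ))) := by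
      rw [← Real.rpow_natCast ‖wordProd A σ‖ k, ← Real.rpow_mul hP0]
      congr 1
      field_simp
    rw [e1]
    have h9 : (‖wordProd A σ‖ ^ k) ^ ((1 : ℝ) / ((j : ℝ) * (k : ℝ)))
        ≤ (CL * Real.sqrt τ ^ j) ^ ((1 : ℝ) / ((j : ℝ) * (k : ℝ))) :=
      Real.rpow_le_rpow (pow_nonneg hP0 k) h6 (by positivity)
    refine le_trans h9 (le_of_eq ?_)
    rw [Real.mul_rpow (le_of_lt hCL0) (pow_nonneg (Real.sqrt_nonneg τ) j)]
    congr 1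
    rw [← Real.rpow_natCast (Real.sqrt τ) j, Real.sqrt_eq_rpow,
      ← Real.rpow_mul hτ0, ← Real.rpow_mul hτ0]
    congr 1
    field_simp
  have hulim : Tendsto
      (fun j : ℕ => CL ^ ((1 : ℝ) / ((j : ℝ) * (k : ℝ))) * τ ^ ((1 : ℝ) / (2 * (k : ℝ))))
      atTop (nhds (τ ^ ((1 : ℝ) / (2 * (k : ℝ))))) := by
    have hx : Tendsto (fun j : ℕ => (1 : ℝ) / ((j : ℝ) * (k : ℝ))) atTop (nhds 0) := by
      have h10 : (fun j : ℕ => (1 : ℝ) / ((j : ℝ) * (k : ℝ)))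
          = fun j : ℕ => (1 / (j : ℝ)) * (1 / (k : ℝ)) := by
        funext j; rw [one_div_mul_one_div]
      rw [h10]
      simpa using tendsto_one_div_atTop_nhds_zero_nat.mul_const (1 / (k : ℝ))
    have hcont : ContinuousAt (fun x : ℝ => CL ^ x) 0 :=
      Real.continuousAt_const_rpow (ne_of_gt hCL0)
    have h11 : Tendsto (fun j : ℕ => CL ^ ((1 : ℝ) / ((j : ℝ) * (k : ℝ)))) atTop
        (nhds (CL ^ (0 : ℝ))) := hcont.tendsto.comp hx
    rw [Real.rpow_zero] at h11
    simpa using h11.mul_const (τ ^ ((1 : ℝ) / (2 * (k : ℝ))))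
  rw [jsr_eq]
  have h12 : limsup (fseq A) atTop ≤ limsup
      (fun j : ℕ => CL ^ ((1 : ℝ) / ((j : ℝ) * (k : ℝ))) * τ ^ ((1 : ℝ) / (2 * (k : ℝ)))) atTop := by
    apply limsup_le_limsup _ (fseq_cobdd A) hulim.isBoundedUnder_le
    filter_upwards [eventually_ge_atTop 1] with j hj using hu j hj
  rw [hulim.limsup_eq] at h12
  exact h12

end Upper

section Lower

open Filter

lemma sInf_S_le {n m k : ℕ} (hm : 0 < m) (hn : 0 < n) (hk : 1 ≤ k)
    (A : Fin m → Matrix (Fin n) (Fin n) ℝ)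
    (hSbdd : BddBelow {τ : ℝ | ∃ X : Matrix (Fin (n ^ k)) (Fin (n ^ k)) ℝ, X.PosDef ∧
      ∀ i, (τ • X - kronPow (A i) k * X * (kronPow (A i) k)ᵀ).PosSemidef})
    {ε : ℝ} (hε : 0 < ε) :
    sInf {τ : ℝ | ∃ X : Matrix (Fin (n ^ k)) (Fin (n ^ k)) ℝ, X.PosDef ∧
      ∀ i, (τ • X - kronPow (A i) k * X * (kronPow (A i) k)ᵀ).PosSemidef}
      ≤ (m : ℝ) * ((jsr A + ε) ^ (2 * k) + ε) := by
  haveI hNI : Nonempty (Fin n) := ⟨⟨0, hn⟩⟩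
  haveI hNN : Nonempty (Fin (n ^ k)) := ⟨⟨0, pow_pos hn k⟩⟩
  haveI : Nonempty (Fin m) := ⟨⟨0, hm⟩⟩
  set B : Fin m → Matrix (Fin (n ^ k)) (Fin (n ^ k)) ℝ := fun i => kronPow (A i) k with hB
  set c := jsr A with hc
  have hc0 : 0 ≤ c := jsr_nonneg hm A
  have hcε : 0 < c + ε := by linarith
  set r : ℝ := (m : ℝ) * ((c + ε) ^ (2 * k) + ε) with hr
  have hmR : (0 : ℝ) < m := by exact_mod_cast hm
  have hr0 : 0 < r := mul_pos hmR (by positivity)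
  have hev : ∀ᶠ j in atTop, fseq A j < c + ε := by
    apply eventually_lt_of_limsup_lt _ (fseq_bdd hm A)
    rw [← jsr_eq]; linarith
  obtain ⟨J0, hJ0⟩ := eventually_atTop.mp (hev.and (eventually_ge_atTop 1))
  have hwb : ∀ j, J0 ≤ j → ∀ σ : Fin j → Fin m, ‖wordProd B σ‖ ≤ ((c + ε) ^ k) ^ j := by
    intro j hj σ
    obtain ⟨h1, h2⟩ := hJ0 j hj
    have h3 : l2OpNorm (wordProd A σ) ^ ((1 : ℝ) / (j : ℝ)) ≤ fseq A j := term_le_fseq A σ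
    have h4 : ‖wordProd A σ‖ ≤ (c + ε) ^ j := by
      apply rpow_inv_le_pow h2 (norm_nonneg _) (le_of_lt hcε)
      exact le_of_lt (lt_of_le_of_lt h3 h1)
    have h5 : ‖wordProd B σ‖ = ‖wordProd A σ‖ ^ k := by
      rw [hB, wordProd_kronPow, norm_kronPow]
    rw [h5]
    calc ‖wordProd A σ‖ ^ k ≤ ((c + ε) ^ j) ^ k := pow_le_pow_left₀ (norm_nonneg _) h4 k
      _ = ((c + ε) ^ k) ^ j := by rw [← pow_mul, ← pow_mul, mul_comm]
  set Smat : ℕ → Matrix (Fin (n ^ k)) (Fin (n ^ k)) ℝ :=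
    fun j => ∑ σ : Fin j → Fin m, wordProd B σ * (wordProd B σ)ᵀ with hSmat
  have hSpsd : ∀ j, (Smat j).PosSemidef := by
    intro j
    apply psd_sum
    intro σ _
    have h6 := Matrix.posSemidef_self_mul_conjTranspose (wordProd B σ)
    rwa [conjT_real] at h6
  have hSherm : ∀ j, (Smat j)ᵀ = Smat j := by
    intro j
    have h7 := (hSpsd j).1
    rwa [Matrix.IsHermitian, conjT_real] at h7
  have hS0 : Smat 0 = 1 := by
    simp only [hSmat]
    rw [Fintype.sum_unique (fun σ : Fin 0 → Fin m => wordProd B σ * (wordProd B σ)ᵀ)]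
    rw [wordProd_zero, Matrix.transpose_one, mul_one]
  have hSrec : ∀ j, Smat (j + 1) = ∑ i, B i * Smat j * (B i)ᵀ := by
    intro j
    simp only [hSmat]
    rw [sum_word_succ (fun σ => wordProd B σ * (wordProd B σ)ᵀ)]
    apply Finset.sum_congr rfl
    intro i _
    have e : ∀ σ : Fin j → Fin m,
        wordProd B (Fin.snoc σ i) * (wordProd B (Fin.snoc σ i))ᵀ
          = B i * (wordProd B σ * (wordProd B σ)ᵀ) * (B i)ᵀ := by
      intro σ
      rw [wordProd_snoc, Matrix.transpose_mul]
      simp only [Matrix.mul_assoc]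
    rw [Finset.sum_congr rfl fun σ _ => e σ, ← Finset.sum_mul, ← Finset.mul_sum]
  have hSnormle : ‖Smat (J0 + 1)‖ ≤ ((m : ℝ) * (c + ε) ^ (2 * k)) ^ (J0 + 1) := by
    have h11 : ‖Smat (J0 + 1)‖
        ≤ ∑ σ : Fin (J0 + 1) → Fin m, ‖wordProd B σ * (wordProd B σ)ᵀ‖ := by
      simp only [hSmat]
      exact norm_sum_le _ _
    have h12 : ∀ σ : Fin (J0 + 1) → Fin m,
        ‖wordProd B σ * (wordProd B σ)ᵀ‖ ≤ (((c + ε) ^ k) ^ (J0 + 1)) ^ 2 := by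
      intro σ
      have h13 := hwb (J0 + 1) (Nat.le_succ J0) σ
      calc ‖wordProd B σ * (wordProd B σ)ᵀ‖
          ≤ ‖wordProd B σ‖ * ‖(wordProd B σ)ᵀ‖ := norm_mul_le _ _
        _ = ‖wordProd B σ‖ ^ 2 := by rw [norm_transpose]; ring
        _ ≤ (((c + ε) ^ k) ^ (J0 + 1)) ^ 2 := pow_le_pow_left₀ (norm_nonneg _) h13 2
    calc ‖Smat (J0 + 1)‖ ≤ ∑ _σ : Fin (J0 + 1) → Fin m, (((c + ε) ^ k) ^ (J0 + 1)) ^ 2 :=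
          le_trans h11 (Finset.sum_le_sum fun σ _ => h12 σ)
      _ = (m : ℝ) ^ (J0 + 1) * (((c + ε) ^ k) ^ (J0 + 1)) ^ 2 := by
          rw [Finset.sum_const, Finset.card_univ, Fintype.card_fun, Fintype.card_fin,
            Fintype.card_fin, nsmul_eq_mul]
          push_cast
          ring
      _ = ((m : ℝ) * (c + ε) ^ (2 * k)) ^ (J0 + 1) := by
          rw [mul_pow]
          congr 1
          rw [← pow_mul, ← pow_mul, ← pow_mul]
          ring_nf
  set w : ℕ → ℝ := fun j => (r⁻¹) ^ j with hw
  have hw0 : ∀ j, 0 ≤ w j := fun j => pow_nonneg (inv_nonneg.mpr (le_of_lt hr0)) j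
  have hw00 : w 0 = 1 := pow_zero _
  have hrw : ∀ j, r * w (j + 1) = w j := by
    intro j
    simp only [hw, pow_succ]
    rw [← mul_assoc, mul_comm r, mul_assoc, mul_inv_cancel₀ (ne_of_gt hr0), mul_one]
  have htail : ((1 : Matrix (Fin (n ^ k)) (Fin (n ^ k)) ℝ)
      - w (J0 + 1) • Smat (J0 + 1)).PosSemidef := by
    have hnorm : ‖w (J0 + 1) • Smat (J0 + 1)‖ ≤ 1 := by
      rw [norm_smul, Real.norm_eq_abs, abs_of_nonneg (hw0 _)]
      have hle : (m : ℝ) * (c + ε) ^ (2 * k) ≤ r := by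
        rw [hr]
        apply mul_le_mul_of_nonneg_left _ (le_of_lt hmR)
        linarith
      have h14 : ((m : ℝ) * (c + ε) ^ (2 * k)) ^ (J0 + 1) ≤ r ^ (J0 + 1) :=
        pow_le_pow_left₀ (by positivity) hle _
      calc w (J0 + 1) * ‖Smat (J0 + 1)‖ ≤ w (J0 + 1) * r ^ (J0 + 1) :=
            mul_le_mul_of_nonneg_left (le_trans hSnormle h14) (hw0 _)
        _ = (r⁻¹ * r) ^ (J0 + 1) := by simp only [hw, mul_pow]
        _ = 1 := by rw [inv_mul_cancel₀ (ne_of_gt hr0), one_pow]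
    have h15 : (w (J0 + 1) • Smat (J0 + 1))ᵀ = w (J0 + 1) • Smat (J0 + 1) := by
      rw [Matrix.transpose_smul, hSherm]
    have h16 := psd_of_norm_le h15 hnorm
    rwa [one_smul] at h16
  set X : Matrix (Fin (n ^ k)) (Fin (n ^ k)) ℝ :=
    ∑ j ∈ Finset.range (J0 + 1), w j • Smat j with hX
  have hXpd : X.PosDef := by
    have h16 : X = (∑ j ∈ Finset.range J0, w (j + 1) • Smat (j + 1))
        + (1 : Matrix (Fin (n ^ k)) (Fin (n ^ k)) ℝ) := by
      rw [hX, Finset.sum_range_succ' (fun j => w j • Smat j) J0]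
      rw [hw00, hS0, one_smul]
    rw [h16, add_comm]
    exact Matrix.PosDef.add_posSemidef Matrix.PosDef.one
      (psd_sum _ _ fun j _ => psd_smul (hSpsd _) (hw0 _))
  have hmem : ∀ i, (r • X - B i * X * (B i)ᵀ).PosSemidef := by
    intro i
    have hA1 : B i * X * (B i)ᵀ
        = ∑ j ∈ Finset.range (J0 + 1), w j • (B i * Smat j * (B i)ᵀ) := by
      simp only [hX, Finset.mul_sum, Finset.sum_mul, mul_smul_comm, smul_mul_assoc]
    have hsub : ∀ j, (Smat (j + 1) - B i * Smat j * (B i)ᵀ).PosSemidef := by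
      intro j
      have h17 : Smat (j + 1) - B i * Smat j * (B i)ᵀ
          = ∑ i' ∈ Finset.univ.erase i, B i' * Smat j * (B i')ᵀ := by
        rw [hSrec j, ← Finset.sum_erase_add _ _ (Finset.mem_univ i), add_sub_cancel_right]
      rw [h17]
      apply psd_sum
      intro i' _
      have h18 := (hSpsd j).mul_mul_conjTranspose_same (B i')
      rwa [conjT_real] at h18
    have hident : r • X - B i * X * (B i)ᵀ
        = (∑ j ∈ Finset.range (J0 + 1), w j • (Smat (j + 1) - B i * Smat j * (B i)ᵀ))
          + r • ((1 : Matrix (Fin (n ^ k)) (Fin (n ^ k)) ℝ) - w (J0 + 1) • Smat (J0 + 1)) := by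
      have hBB : ∑ j ∈ Finset.range (J0 + 1), w j • Smat (j + 1)
          = r • X + (r * w (J0 + 1)) • Smat (J0 + 1)
            - r • (1 : Matrix (Fin (n ^ k)) (Fin (n ^ k)) ℝ) := by
        have h10 : r • X = ∑ j ∈ Finset.range (J0 + 1), (r * w j) • Smat j := by
          simp only [hX, Finset.smul_sum, smul_smul]
        rw [h10, Finset.sum_range_succ' (fun j => (r * w j) • Smat j) J0]
        rw [Finset.sum_range_succ (fun j => w j • Smat (j + 1)) J0]
        have e2 : ∀ j, (r * w (j + 1)) • Smat (j + 1) = w j • Smat (j + 1) := fun j => by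
          rw [hrw]
        rw [Finset.sum_congr rfl fun j _ => e2 j]
        rw [show r * w 0 = r from by rw [hw00, mul_one], hS0, hrw J0]
        abel
      rw [hA1]
      simp only [smul_sub, Finset.sum_sub_distrib, smul_smul]
      rw [hBB]
      abel
    rw [hident]
    exact (psd_sum _ _ fun j _ => psd_smul (hsub j) (hw0 j)).add
      (psd_smul htail (le_of_lt hr0))
  apply csInf_le hSbdd
  exact ⟨X, hXpd, hmem⟩

end Lower

end EllipsAux


open EllipsAux Filter in
/-- `(1/m^{1/(2k)}) ρ̂(A₁^{⊗k}, …, Aₘ^{⊗k})^{1/k} ≤ ρ(A₁, …, Aₘ)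
≤ ρ̂(A₁^{⊗k}, …, Aₘ^{⊗k})^{1/k}`. -/
theorem ellips_kronPow_accuracy {n m : ℕ} (hm : 0 < m)
    (A : Fin m → Matrix (Fin n) (Fin n) ℝ) (k : ℕ) (hk : 1 ≤ k) :
    (1 / (m : ℝ) ^ ((1 : ℝ) / (2 * (k : ℝ)))) *
        ellips (fun i => kronPow (A i) k) ^ ((1 : ℝ) / (k : ℝ)) ≤ jsr A ∧
      jsr A ≤ ellips (fun i => kronPow (A i) k) ^ ((1 : ℝ) / (k : ℝ)) := by
  classical
  haveI : Nonempty (Fin m) := ⟨⟨0, hm⟩⟩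
  set S : Set ℝ := {τ : ℝ | ∃ X : Matrix (Fin (n ^ k)) (Fin (n ^ k)) ℝ, X.PosDef ∧
      ∀ i, (τ • X - kronPow (A i) k * X * (kronPow (A i) k)ᵀ).PosSemidef} with hS
  have hell : ellips (fun i => kronPow (A i) k) = Real.sqrt (sInf S) := rfl
  rw [hell]
  have hkR : (0 : ℝ) < k := by exact_mod_cast hk
  rcases Nat.eq_zero_or_pos n with hn | hn
  · -- degenerate case `n = 0`
    subst hn
    haveI hIE : IsEmpty (Fin ((0 : ℕ) ^ k)) :=
      ⟨fun x => absurd x.2 (by simp [zero_pow (by omega : k ≠ 0)])⟩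
    have hSuniv : S = Set.univ := by
      ext τ
      simp only [hS, Set.mem_setOf_eq, Set.mem_univ, iff_true]
      refine ⟨1, ⟨Matrix.isHermitian_one, fun x hx => ?_⟩, fun i => Matrix.PosSemidef.of_dotProduct_mulVec_nonneg ?_ fun x => ?_⟩
      · exact absurd (Finsupp.ext fun i => (hIE.false i).elim : x = 0) hx
      · show _ = _
        ext i j
        exact (hIE.false i).elim
      · show 0 ≤ _ ⬝ᵥ _
        simp [dotProduct]
    have hsinf : sInf S = 0 := by
      rw [hSuniv]
      apply Real.sInf_of_not_bddBelow
      rintro ⟨b, hb⟩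
      have h1 : b ≤ b - 1 := hb (Set.mem_univ _)
      linarith
    rw [hsinf, Real.sqrt_zero, Real.zero_rpow (by positivity : (1 : ℝ) / (k : ℝ) ≠ 0)]
    have hjsr0 : jsr A = 0 := by
      rw [jsr_eq]
      have hEv : (fseq A) =ᶠ[atTop] (fun _ => (0 : ℝ)) := by
        filter_upwards [eventually_ge_atTop 1] with j hj
        have hjR : (0 : ℝ) < j := by exact_mod_cast hj
        have h0 : ∀ σ : Fin j → Fin m,
            l2OpNorm (wordProd A σ) ^ ((1 : ℝ) / (j : ℝ)) = 0 := by
          intro σ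
          rw [l2OpNorm_eq_norm]
          have hz : wordProd A σ = 0 := by
            ext i jj
            exact absurd i.2 (by omega)
          rw [hz, norm_zero, Real.zero_rpow (by positivity)]
        show (⨆ σ : Fin j → Fin m, l2OpNorm (wordProd A σ) ^ ((1 : ℝ) / (j : ℝ))) = 0
        rw [show (fun σ : Fin j → Fin m =>
          l2OpNorm (wordProd A σ) ^ ((1 : ℝ) / (j : ℝ))) = fun _ => (0 : ℝ) from
          funext fun σ => h0 σ]
        exact ciSup_const
      rw [limsup_congr hEv, limsup_const]
    rw [hjsr0]
    constructor
    · simp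
    · exact le_refl 0
  · -- main case `n ≥ 1`
    haveI hNN : Nonempty (Fin (n ^ k)) := ⟨⟨0, pow_pos hn k⟩⟩
    haveI hNI : Nonempty (Fin n) := ⟨⟨0, hn⟩⟩
    have hS_nonneg : ∀ τ ∈ S, 0 ≤ τ := by
      rintro τ ⟨X, hX, hPSD⟩
      have hx0 : (fun _ : Fin (n ^ k) => (1 : ℝ)) ≠ 0 := by
        intro h
        have h1 := congrFun h (Classical.arbitrary _)
        simp at h1
      have hXx := hX.dotProduct_mulVec_pos hx0
      have hstar : star (fun _ : Fin (n ^ k) => (1 : ℝ)) = fun _ => (1 : ℝ) :=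
        funext fun i => by simp
      rw [hstar] at hXx
      have hpsd := (hPSD (⟨0, hm⟩ : Fin m)).dotProduct_mulVec_nonneg (fun _ : Fin (n ^ k) => (1 : ℝ))
      rw [hstar, Matrix.sub_mulVec, dotProduct_sub, Matrix.smul_mulVec,
        dotProduct_smul] at hpsd
      have hBX : 0 ≤ (fun _ : Fin (n ^ k) => (1 : ℝ)) ⬝ᵥ
          (kronPow (A ⟨0, hm⟩) k * X * (kronPow (A ⟨0, hm⟩) k)ᵀ) *ᵥ
            (fun _ : Fin (n ^ k) => (1 : ℝ)) := by
        rw [← Matrix.mulVec_mulVec, ← Matrix.mulVec_mulVec, Matrix.dotProduct_mulVec,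
          ← Matrix.mulVec_transpose]
        have h7 := hX.posSemidef.dotProduct_mulVec_nonneg ((kronPow (A ⟨0, hm⟩) k)ᵀ *ᵥ (fun _ => (1 : ℝ)))
        rwa [show star ((kronPow (A ⟨0, hm⟩) k)ᵀ *ᵥ (fun _ : Fin (n ^ k) => (1 : ℝ)))
          = (kronPow (A ⟨0, hm⟩) k)ᵀ *ᵥ (fun _ => (1 : ℝ)) from funext fun i => by simp] at h7
      rw [smul_eq_mul] at hpsd
      nlinarith
    have hSbdd : BddBelow S := ⟨0, fun τ hτ => hS_nonneg τ hτ⟩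
    have hSne : S.Nonempty := by
      refine ⟨1 + ∑ i, ‖kronPow (A i) k * (kronPow (A i) k)ᵀ‖, 1, Matrix.PosDef.one,
        fun i => ?_⟩
      have hsym : (kronPow (A i) k * (kronPow (A i) k)ᵀ)ᵀ
          = kronPow (A i) k * (kronPow (A i) k)ᵀ := by
        rw [Matrix.transpose_mul, Matrix.transpose_transpose]
      have hle : ‖kronPow (A i) k * (kronPow (A i) k)ᵀ‖
          ≤ 1 + ∑ i', ‖kronPow (A i') k * (kronPow (A i') k)ᵀ‖ := by
        have h9 := Finset.single_le_sum
          (f := fun i' => ‖kronPow (A i') k * (kronPow (A i') k)ᵀ‖)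
          (fun i' _ => norm_nonneg _) (Finset.mem_univ i)
        linarith
      have h8 := psd_of_norm_le hsym hle
      rwa [show kronPow (A i) k * 1 * (kronPow (A i) k)ᵀ
        = kronPow (A i) k * (kronPow (A i) k)ᵀ from by rw [Matrix.mul_one]]
    have hs0 : 0 ≤ sInf S := le_csInf hSne hS_nonneg
    have hj0 : 0 ≤ jsr A := jsr_nonneg hm A
    have hform : Real.sqrt (sInf S) ^ ((1 : ℝ) / (k : ℝ))
        = sInf S ^ ((1 : ℝ) / (2 * (k : ℝ))) := by
      rw [Real.sqrt_eq_rpow, ← Real.rpow_mul hs0]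
      congr 1
      field_simp
    rw [hform]
    constructor
    · -- lower bound
      have hlow : sInf S ≤ (m : ℝ) * (jsr A) ^ (2 * k) := by
        have hc2 : Continuous (fun ε : ℝ => (m : ℝ) * ((jsr A + ε) ^ (2 * k) + ε)) := by
          continuity
        have hcont : Tendsto (fun ε : ℝ => (m : ℝ) * ((jsr A + ε) ^ (2 * k) + ε))
            (nhdsWithin 0 (Set.Ioi 0)) (nhds ((m : ℝ) * (jsr A) ^ (2 * k))) := by
          apply tendsto_nhdsWithin_of_tendsto_nhds
          simpa using hc2.tendsto 0
        apply ge_of_tendsto hcont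
        filter_upwards [self_mem_nhdsWithin] with ε hε
        exact sInf_S_le hm hn hk A hSbdd hε
      have h1 : sInf S ^ ((1 : ℝ) / (2 * (k : ℝ)))
          ≤ ((m : ℝ) * (jsr A) ^ (2 * k)) ^ ((1 : ℝ) / (2 * (k : ℝ))) :=
        Real.rpow_le_rpow hs0 hlow (by positivity)
      have h2 : ((m : ℝ) * (jsr A) ^ (2 * k)) ^ ((1 : ℝ) / (2 * (k : ℝ)))
          = (m : ℝ) ^ ((1 : ℝ) / (2 * (k : ℝ))) * jsr A := by
        rw [Real.mul_rpow (by positivity) (by positivity)]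
        congr 1
        rw [← Real.rpow_natCast (jsr A) (2 * k), ← Real.rpow_mul hj0]
        rw [show ((2 * k : ℕ) : ℝ) * ((1 : ℝ) / (2 * (k : ℝ))) = 1 from by
          push_cast; field_simp]
        exact Real.rpow_one _
      rw [h2] at h1
      have hmrp : 0 < (m : ℝ) ^ ((1 : ℝ) / (2 * (k : ℝ))) :=
        Real.rpow_pos_of_pos (by exact_mod_cast hm) _
      calc (1 / (m : ℝ) ^ ((1 : ℝ) / (2 * (k : ℝ)))) * sInf S ^ ((1 : ℝ) / (2 * (k : ℝ)))
          ≤ (1 / (m : ℝ) ^ ((1 : ℝ) / (2 * (k : ℝ))))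
            * ((m : ℝ) ^ ((1 : ℝ) / (2 * (k : ℝ))) * jsr A) :=
            mul_le_mul_of_nonneg_left h1 (by positivity)
        _ = jsr A := by field_simp
    · -- upper bound
      have hup : ∀ τ ∈ S, jsr A ≤ τ ^ ((1 : ℝ) / (2 * (k : ℝ))) := by
        rintro τ ⟨X, hX, hPSD⟩
        exact jsr_le_tau hm hn hk A (hS_nonneg τ ⟨X, hX, hPSD⟩) X hX hPSD
      have h3 : jsr A ^ (2 * (k : ℝ)) ≤ sInf S := by
        apply le_csInf hSne
        intro τ hτ
        have h4 := hup τ hτ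
        have h5 : jsr A ^ (2 * (k : ℝ)) ≤ (τ ^ ((1 : ℝ) / (2 * (k : ℝ)))) ^ (2 * (k : ℝ)) :=
          Real.rpow_le_rpow hj0 h4 (by positivity)
        rwa [← Real.rpow_mul (hS_nonneg τ hτ), one_div,
          inv_mul_cancel₀ (by positivity : 2 * (k : ℝ) ≠ 0), Real.rpow_one] at h5
      calc jsr A = (jsr A ^ (2 * (k : ℝ))) ^ ((1 : ℝ) / (2 * (k : ℝ))) := by
            rw [← Real.rpow_mul hj0, mul_one_div,
              div_self (by positivity : 2 * (k : ℝ) ≠ 0), Real.rpow_one]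
        _ ≤ sInf S ^ ((1 : ℝ) / (2 * (k : ℝ))) :=
            Real.rpow_le_rpow (Real.rpow_nonneg hj0 _) h3 (by positivity)
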